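/- Let K be a field and u ∈ Kˣ; set v = u². Fix an integer n ≥ 3. Let M_n be the free K-module with basis {u⃗_d}_{d ∈ ℤ}, and for i ∈ ℤ/nℤ define F_i(u⃗_d) = u·u⃗_{d+1} if d + i ≡ 0 (mod n) and 0 otherwise, and E_i(u⃗_d) = u⁻¹·u⃗_{d−1} if d + i ≡ 1 (mod n) and 0 otherwise. Then for all i, j ∈ ℤ/nℤ: (i) if i ≠ j and i ≠ j ± 1 (in ℤ/nℤ) then E_i ∘ E_j = E_j ∘ E_i and F_i ∘ F_j = F_j ∘ F_i; (ii) if j = i + 1 or j = i − 1 (in ℤ/nℤ) then the quantum Serre relations hold: E_i² ∘ E_j − (v + v⁻¹)·E_i ∘ E_j ∘ E_i + E_j ∘ E_i² = 0 and F_i² ∘ F_j − (v + v⁻¹)·F_i ∘ F_j ∘ F_i + F_j ∘ F_i² = 0 (indeed each of the three composites in each relation is the zero operator). -/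

import Mathlib

/-!
Both `E_i` and `F_i` move each basis vector by one step, and only from a single residue class
mod `n`. Hence `E_i ∘ E_j` can be nonzero only if `i = j + 1`, and `F_i ∘ F_j` only if
`i = j - 1`. For `n ≥ 3` this kills `E_i²`, and `E_i E_j E_i` (it would need both `j = i + 1`
and `i = j + 1`, i.e. `2 = 0`), and likewise for `F`; so every composite in the Serre relations
vanishes, and in case (i) both sides of each commutation relation are zero.
-/

/-- The operator `F_i` on the free module with basis `{u⃗_d}_{d∈ℤ}`:
`F_i(u⃗_d) = u·u⃗_{d+1}` if `d + i ≡ 0 (mod n)`, and `0` otherwise. -/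
noncomputable def FopZ {K : Type*} [Field K] (u : Kˣ) (n : ℕ) (i : ZMod n) :
    (ℤ →₀ K) →ₗ[K] (ℤ →₀ K) :=
  Finsupp.lsum K fun d =>
    if (d : ZMod n) + i = 0 then (u : K) • Finsupp.lsingle (d + 1) else 0

/-- The operator `E_i`: `E_i(u⃗_d) = u⁻¹·u⃗_{d−1}` if `d + i ≡ 1 (mod n)`, and `0` otherwise. -/
noncomputable def EopZ {K : Type*} [Field K] (u : Kˣ) (n : ℕ) (i : ZMod n) :
    (ℤ →₀ K) →ₗ[K] (ℤ →₀ K) :=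
  Finsupp.lsum K fun d =>
    if (d : ZMod n) + i = 1 then ((u⁻¹ : Kˣ) : K) • Finsupp.lsingle (d - 1) else 0

/-- The operator `K_i^s` (for `s = ±1`):
`K_i^s(u⃗_d) = v^{s·(𝟙[d+i≡0] − 𝟙[d+i≡1])}·u⃗_d`, where `v = u²`. -/
noncomputable def KopZ {K : Type*} [Field K] (u : Kˣ) (n : ℕ) (i : ZMod n) (s : ℤ) :
    (ℤ →₀ K) →ₗ[K] (ℤ →₀ K) :=
  Finsupp.lsum K fun d =>
    ((((u ^ 2) ^ (s * ((if (d : ZMod n) + i = 0 then 1 else 0) -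
        (if (d : ZMod n) + i = 1 then 1 else 0)))) : Kˣ) : K) • Finsupp.lsingle d

section residueShift

variable {K : Type*} [Field K] {n : ℕ}

noncomputable def residueShift (a : ZMod n) (s : ℤ) (c : K) (i : ZMod n) :
    (ℤ →₀ K) →ₗ[K] (ℤ →₀ K) :=
  Finsupp.lsum K fun d => if (d : ZMod n) + i = a then c • Finsupp.lsingle (d + s) else 0

variable {a : ZMod n} {s : ℤ} {c : K}

theorem residueShift_single (i : ZMod n) (d : ℤ) (c' : K) :
    residueShift a s c i (Finsupp.single d c') =
      if (d : ZMod n) + i = a then Finsupp.single (d + s) (c * c') else 0 := by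
  rw [residueShift, Finsupp.lsum_single]
  split_ifs <;> simp

theorem residueShift_comp_eq_zero {i j : ZMod n} (h : i ≠ j - s) :
    residueShift a s c i ∘ₗ residueShift a s c j = 0 := by
  refine Finsupp.lhom_ext fun d c' => ?_
  rw [LinearMap.comp_apply, residueShift_single]
  split_ifs with hj
  · have hi : ¬((d + s : ℤ) : ZMod n) + i = a := by
      push_cast
      exact fun hi => h (by linear_combination hi - hj)
    rw [residueShift_single, if_neg hi, LinearMap.zero_apply]
  · simp

theorem residueShift_comm {i j : ZMod n} (hij : i ≠ j - s) (hji : j ≠ i - s) :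
    residueShift a s c i ∘ₗ residueShift a s c j =
      residueShift a s c j ∘ₗ residueShift a s c i := by
  rw [residueShift_comp_eq_zero hij, residueShift_comp_eq_zero hji]

theorem residueShift_comp_self (hs : (s : ZMod n) ≠ 0) (i : ZMod n) :
    residueShift a s c i ∘ₗ residueShift a s c i = 0 :=
  residueShift_comp_eq_zero fun h => hs (by linear_combination h)

theorem residueShift_comp_self_comp (hs : (s : ZMod n) ≠ 0) (i : ZMod n)
    (f : (ℤ →₀ K) →ₗ[K] (ℤ →₀ K)) :
    residueShift a s c i ∘ₗ residueShift a s c i ∘ₗ f = 0 := by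
  rw [← LinearMap.comp_assoc, residueShift_comp_self hs, LinearMap.zero_comp]

theorem residueShift_comp_comp_self (hs : ((2 * s : ℤ) : ZMod n) ≠ 0) (i j : ZMod n) :
    residueShift a s c i ∘ₗ residueShift a s c j ∘ₗ residueShift a s c i = 0 := by
  by_cases hji : j = i - s
  · have hij : i ≠ j - s := fun hij => hs (by push_cast; linear_combination hji + hij)
    rw [← LinearMap.comp_assoc, residueShift_comp_eq_zero hij, LinearMap.zero_comp]
  · rw [residueShift_comp_eq_zero hji, LinearMap.comp_zero]

end residueShift

theorem EopZ_eq_residueShift {K : Type*} [Field K] (u : Kˣ) (n : ℕ) :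
    EopZ u n = residueShift 1 (-1) ((u⁻¹ : Kˣ) : K) :=
  rfl

theorem FopZ_eq_residueShift {K : Type*} [Field K] (u : Kˣ) (n : ℕ) :
    FopZ u n = residueShift 0 1 (u : K) :=
  rfl

theorem ZMod.intCast_ne_zero_of_natAbs_lt {n : ℕ} {m : ℤ} (hm : m ≠ 0) (hmn : m.natAbs < n) :
    (m : ZMod n) ≠ 0 := by
  rw [Ne, ZMod.intCast_zmod_eq_zero_iff_dvd]
  intro hdvd
  have := Int.natAbs_le_of_dvd_ne_zero hdvd hm
  omega

/-- on the fundamental representation `𝕍_n` (`n ≥ 3`, `v = u²`):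
(i) if `i ≠ j`, `i ≠ j ± 1` in `ℤ/nℤ`, then `E_i`, `E_j` commute and `F_i`, `F_j` commute;
(ii) if `j = i ± 1`, the quantum Serre relations
`E_i²E_j − (v+v⁻¹)E_iE_jE_i + E_jE_i² = 0` and `F_i²F_j − (v+v⁻¹)F_iF_jF_i + F_jF_i² = 0`
hold (indeed each of the three composites in each relation vanishes). -/
theorem fundamental_rep_serre {K : Type*} [Field K] (u : Kˣ) (n : ℕ) (hn : 3 ≤ n) :
    (∀ i j : ZMod n, i ≠ j → i ≠ j + 1 → i ≠ j - 1 →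
      (EopZ u n i ∘ₗ EopZ u n j = EopZ u n j ∘ₗ EopZ u n i ∧
       FopZ u n i ∘ₗ FopZ u n j = FopZ u n j ∘ₗ FopZ u n i)) ∧
    (∀ i j : ZMod n, (j = i + 1 ∨ j = i - 1) →
      (EopZ u n i ∘ₗ EopZ u n i ∘ₗ EopZ u n j -
          (((u : K) ^ 2 + ((u : K) ^ 2)⁻¹) •
            (EopZ u n i ∘ₗ EopZ u n j ∘ₗ EopZ u n i)) +
          EopZ u n j ∘ₗ EopZ u n i ∘ₗ EopZ u n i = 0 ∧
       FopZ u n i ∘ₗ FopZ u n i ∘ₗ FopZ u n j -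
          (((u : K) ^ 2 + ((u : K) ^ 2)⁻¹) •
            (FopZ u n i ∘ₗ FopZ u n j ∘ₗ FopZ u n i)) +
          FopZ u n j ∘ₗ FopZ u n i ∘ₗ FopZ u n i = 0 ∧
       EopZ u n i ∘ₗ EopZ u n i ∘ₗ EopZ u n j = 0 ∧
       EopZ u n i ∘ₗ EopZ u n j ∘ₗ EopZ u n i = 0 ∧
       EopZ u n j ∘ₗ EopZ u n i ∘ₗ EopZ u n i = 0 ∧
       FopZ u n i ∘ₗ FopZ u n i ∘ₗ FopZ u n j = 0 ∧
       FopZ u n i ∘ₗ FopZ u n j ∘ₗ FopZ u n i = 0 ∧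
       FopZ u n j ∘ₗ FopZ u n i ∘ₗ FopZ u n i = 0)) := by
  have cast_ne_zero (m : ℤ) (hm : m ≠ 0) (hmn : m.natAbs ≤ 2) : (m : ZMod n) ≠ 0 :=
    ZMod.intCast_ne_zero_of_natAbs_lt hm (by omega)
  have hE₁ : ((-1 : ℤ) : ZMod n) ≠ 0 := cast_ne_zero _ (by norm_num) (by norm_num)
  have hE₂ : ((2 * -1 : ℤ) : ZMod n) ≠ 0 := cast_ne_zero _ (by norm_num) (by norm_num)
  have hF₁ : ((1 : ℤ) : ZMod n) ≠ 0 := cast_ne_zero _ (by norm_num) (by norm_num)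
  have hF₂ : ((2 * 1 : ℤ) : ZMod n) ≠ 0 := cast_ne_zero _ (by norm_num) (by norm_num)
  simp only [EopZ_eq_residueShift, FopZ_eq_residueShift]
  refine ⟨fun i j _ hij₁ hij₂ => ⟨?_, ?_⟩, fun i j _ => ?_⟩
  · refine residueShift_comm (by push_cast; simpa using hij₁) fun h => hij₂ ?_
    push_cast at h
    linear_combination -h
  · refine residueShift_comm (by push_cast; simpa using hij₂) fun h => hij₁ ?_
    push_cast at h
    linear_combination -h
  · simp only [residueShift_comp_self_comp hE₁, residueShift_comp_self_comp hF₁,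
      residueShift_comp_self hE₁, residueShift_comp_self hF₁, residueShift_comp_comp_self hE₂,
      residueShift_comp_comp_self hF₂, LinearMap.comp_zero, smul_zero, add_zero, and_true]
    constructor <;> abel
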